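/- Define I_n(b) = b ∫_0^∞ sinc(b t) · ∏_{k=0}^n sinc(t/(2k+1)) dt for real b ≥ 1 and natural numbers n. Then I_0(1) = π/2, and I_n(1) < π/2 for every n ≥ 1. -/

import Mathlib

/-!
The tent function `max (1 - |x|) 0` has Fourier transform `sinc (π w) ^ 2`, so Fourier inversion
at `0` gives `∫ sinc ^ 2 = π` over the line, hence `π / 2` over the half-line. For `n ≥ 1` the
integrand is `sinc t ^ 2` times a product of sinc factors, each of absolute value at most `1` and
strictly less than `1` away from `0`. So the (even) integrand is bounded by `sinc ^ 2` and strictly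
smaller near `t = π / 2`, which pushes the integral strictly below `π / 2`.
-/

open MeasureTheory Filter Real Finset

noncomputable def sinc (t : ℝ) : ℝ := if t = 0 then 1 else Real.sin t / t

open scoped FourierTransform Topology

theorem integral_eq_two_mul_integral_Ioi_of_even {f : ℝ → ℝ} (hf : ∀ x, f (-x) = f x) :
    ∫ x, f x = 2 * ∫ x in Set.Ioi 0, f x := by
  have habs : ∀ x, f |x| = f x := fun x => by
    rcases abs_choice x with h | h <;> rw [h]; exact hf x
  simpa only [habs] using integral_comp_abs (f := f)

theorem tendsto_intervalIntegral_of_even {f : ℝ → ℝ} (hf : ∀ x, f (-x) = f x)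
    (hfi : Integrable f) :
    Tendsto (fun R => ∫ x in 0..R, f x) atTop (𝓝 ((∫ x, f x) / 2)) := by
  rw [integral_eq_two_mul_integral_Ioi_of_even hf, mul_div_cancel_left₀ _ two_ne_zero]
  exact intervalIntegral_tendsto_integral_Ioi 0 hfi.integrableOn tendsto_id

theorem fourier_ofReal_eq_integral_cos_mul_of_even {f : ℝ → ℝ} (hf : ∀ x, f (-x) = f x) (hfi : Integrable f)
    (w : ℝ) : 𝓕 (fun x => (f x : ℂ)) w = ↑(∫ v, cos (2 * π * w * v) * f v) := by
  rw [Real.fourier_real_eq_integral_exp_smul, ← integral_complex_ofReal]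
  set g : ℝ → ℂ := fun v => Complex.exp (↑(-2 * π * v * w) * Complex.I) • (f v : ℂ)
  have hg : Integrable g := by
    refine hfi.ofReal.bdd_mul (c := 1) (by fun_prop) (Eventually.of_forall fun v => ?_)
    rw [Complex.norm_exp_ofReal_mul_I]
  have hsym : ∀ v, g v + g (-v) = 2 * ↑(cos (2 * π * w * v) * f v) := fun v => by
    simp only [g, hf, smul_eq_mul]
    rw [show -2 * π * -v * w = 2 * π * w * v by ring, show -2 * π * v * w = -(2 * π * w * v) by ring,
      Complex.exp_mul_I, Complex.exp_mul_I]
    push_cast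
    rw [Complex.cos_neg, Complex.sin_neg]
    ring
  calc ∫ v, g v = ((∫ v, g v) + ∫ v, g (-v)) / 2 := by rw [integral_neg_eq_self]; ring
    _ = ∫ v, ((cos (2 * π * w * v) * f v : ℝ) : ℂ) := by
      rw [← integral_add hg hg.comp_neg]
      simp only [hsym, integral_const_mul]
      ring

theorem abs_prod_lt_one {ι : Type*} {s : Finset ι} {f : ι → ℝ} (hle : ∀ i ∈ s, |f i| ≤ 1)
    {j : ι} (hj : j ∈ s) (hlt : |f j| < 1) : |∏ i ∈ s, f i| < 1 := by
  classical
  rw [← mul_prod_erase s f hj, abs_mul, abs_prod]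
  calc |f j| * ∏ i ∈ s.erase j, |f i| ≤ |f j| * 1 := by
        gcongr
        exact prod_le_one (fun _ _ => abs_nonneg _) fun i hi => hle i (mem_of_mem_erase hi)
    _ < 1 := by rwa [mul_one]

def tent (x : ℝ) : ℝ := max (1 - |x|) 0

theorem continuous_tent : Continuous tent := by unfold tent; fun_prop

theorem tent_neg (x : ℝ) : tent (-x) = tent x := by simp [tent]

theorem tent_of_one_le_abs {x : ℝ} (hx : 1 ≤ |x|) : tent x = 0 := max_eq_right (by linarith)

theorem integrable_tent : Integrable tent := by
  refine continuous_tent.integrable_of_hasCompactSupport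
    (HasCompactSupport.intro (isCompact_closedBall (0 : ℝ) 1) fun x hx => tent_of_one_le_abs ?_)
  rw [Metric.mem_closedBall, dist_zero_right, Real.norm_eq_abs, not_le] at hx
  exact hx.le

namespace Real

theorem integral_one_sub_mul_cos_two_mul (x : ℝ) :
    ∫ v in (0 : ℝ)..1, (1 - v) * cos (2 * x * v) = sinc x ^ 2 / 2 := by
  rcases eq_or_ne x 0 with rfl | hx
  · norm_num [intervalIntegral.integral_sub intervalIntegrable_const
      intervalIntegral.intervalIntegrable_id, integral_id]
  have hderiv : ∀ v ∈ Set.uIcc (0 : ℝ) 1, HasDerivAt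
      (fun v => (1 - v) * sin (2 * x * v) / (2 * x) - cos (2 * x * v) / (2 * x) ^ 2)
      ((1 - v) * cos (2 * x * v)) v := fun v _ => by
    have hlin : HasDerivAt (fun v => 2 * x * v) (2 * x) v := by
      simpa using (hasDerivAt_id v).const_mul (2 * x)
    refine ((((hasDerivAt_id' v).const_sub 1).fun_mul hlin.sin).div_const (2 * x)).fun_sub
      (hlin.cos.div_const ((2 * x) ^ 2)) |>.congr_deriv ?_
    field_simp
    ring
  rw [intervalIntegral.integral_eq_sub_of_hasDerivAt hderiv
    (Continuous.intervalIntegrable (by fun_prop) _ _), sinc_of_ne_zero hx]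
  simp only [sub_self, zero_mul, zero_div, mul_one, mul_zero, sin_zero, cos_zero,
    cos_two_mul_eq_one_sub]
  field_simp
  ring

theorem integral_cos_mul_tent (x : ℝ) : ∫ v, cos (2 * x * v) * tent v = sinc x ^ 2 := by
  rw [integral_eq_two_mul_integral_Ioi_of_even (fun v => by rw [tent_neg, mul_neg, cos_neg]),
    setIntegral_eq_of_subset_of_forall_sdiff_eq_zero measurableSet_Ioi Set.Ioc_subset_Ioi_self,
    ← intervalIntegral.integral_of_le zero_le_one,
    intervalIntegral.integral_congr (g := fun v => (1 - v) * cos (2 * x * v)),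
    integral_one_sub_mul_cos_two_mul]
  · ring
  · intro v hv
    rw [Set.uIcc_of_le zero_le_one] at hv
    simp [tent, abs_of_nonneg hv.1, hv.2, mul_comm]
  · intro v ⟨hv0, hv1⟩
    have hv : 1 < v := not_le.1 fun h => hv1 ⟨hv0, h⟩
    rw [tent_of_one_le_abs (by rw [abs_of_pos hv0]; exact hv.le), mul_zero]

theorem fourier_tent (w : ℝ) : 𝓕 (fun x => (tent x : ℂ)) w = ↑(sinc (π * w) ^ 2) := by
  rw [fourier_ofReal_eq_integral_cos_mul_of_even tent_neg integrable_tent, ← integral_cos_mul_tent]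
  simp only [mul_assoc]

theorem abs_sinc_lt_one {x : ℝ} (hx : x ≠ 0) : |sinc x| < 1 := by
  rw [sinc_of_ne_zero hx, abs_div, div_lt_one (abs_pos.2 hx)]
  exact abs_sin_lt_abs hx

theorem sinc_sq_mul_one_add_sq_le (t : ℝ) : sinc t ^ 2 * (1 + t ^ 2) ≤ 2 := by
  rcases eq_or_ne t 0 with rfl | ht
  · norm_num
  have hsin : sinc t ^ 2 * t ^ 2 = sin t ^ 2 := by
    rw [sinc_of_ne_zero ht]; field_simp
  have h1 : sinc t ^ 2 ≤ 1 := by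
    simpa using pow_le_one₀ (abs_nonneg _) (abs_sinc_le_one t) (n := 2)
  nlinarith [sin_sq_le_one t]

theorem integrable_sinc_sq : Integrable fun t => sinc t ^ 2 := by
  refine (integrable_inv_one_add_sq.const_mul 2).mono' (by fun_prop)
    (Eventually.of_forall fun t => ?_)
  rw [norm_eq_abs, abs_of_nonneg (sq_nonneg _), ← div_eq_mul_inv,
    le_div_iff₀ (by positivity)]
  exact sinc_sq_mul_one_add_sq_le t

theorem integral_sinc_sq : ∫ t, sinc t ^ 2 = π := by
  have hint : Integrable (𝓕 fun x => (tent x : ℂ)) := by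
    rw [funext fourier_tent]
    exact (integrable_sinc_sq.comp_mul_left' pi_ne_zero).ofReal
  have hinv := integrable_tent.ofReal.fourierInv_fourier_eq hint
    (Complex.continuous_ofReal.comp continuous_tent).continuousAt (v := 0)
  simp only [Real.fourierInv_eq, inner_zero_right, AddChar.map_zero_eq_one, one_smul,
    fourier_tent, integral_complex_ofReal] at hinv
  have h1 : ∫ w, sinc (π * w) ^ 2 = 1 := by
    rw [show tent 0 = 1 by norm_num [tent]] at hinv
    exact_mod_cast hinv
  rw [Measure.integral_comp_mul_left (fun t => sinc t ^ 2), abs_of_pos (inv_pos.2 pi_pos),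
    smul_eq_mul] at h1
  field_simp at h1
  exact h1

noncomputable def borweinIntegrand (n : ℕ) (t : ℝ) : ℝ :=
  sinc t * ∏ k ∈ range (n + 1), sinc (t / (2 * k + 1))

theorem borweinIntegrand_eq_sinc_sq_mul (n : ℕ) (t : ℝ) :
    borweinIntegrand n t = sinc t ^ 2 * ∏ k ∈ range n, sinc (t / (2 * k + 3)) := by
  rw [borweinIntegrand, prod_range_succ']
  push_cast
  ring_nf

theorem borweinIntegrand_zero : borweinIntegrand 0 = fun t => sinc t ^ 2 := by
  ext t
  simp [borweinIntegrand_eq_sinc_sq_mul]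

theorem borweinIntegrand_neg (n : ℕ) (t : ℝ) : borweinIntegrand n (-t) = borweinIntegrand n t := by
  simp [borweinIntegrand, neg_div]

theorem continuous_borweinIntegrand (n : ℕ) : Continuous (borweinIntegrand n) := by
  unfold borweinIntegrand
  fun_prop

theorem abs_borweinIntegrand_le (n : ℕ) (t : ℝ) : |borweinIntegrand n t| ≤ sinc t ^ 2 := by
  rw [borweinIntegrand_eq_sinc_sq_mul, abs_mul, abs_prod, abs_of_nonneg (sq_nonneg _)]
  exact mul_le_of_le_one_right (sq_nonneg _)
    (prod_le_one (fun _ _ => abs_nonneg _) fun _ _ => abs_sinc_le_one _)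

theorem integrable_borweinIntegrand (n : ℕ) : Integrable (borweinIntegrand n) :=
  integrable_sinc_sq.mono' (continuous_borweinIntegrand n).aestronglyMeasurable
    (Eventually.of_forall (abs_borweinIntegrand_le n))

theorem borweinIntegrand_lt_sinc_sq {n : ℕ} (hn : 1 ≤ n) {t : ℝ} (ht : sin t ≠ 0) :
    borweinIntegrand n t < sinc t ^ 2 := by
  have ht0 : t ≠ 0 := by rintro rfl; simp at ht
  have hprod : |∏ k ∈ range n, sinc (t / (2 * k + 3))| < 1 :=
    abs_prod_lt_one (fun _ _ => abs_sinc_le_one _) (mem_range.2 hn)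
      (abs_sinc_lt_one (div_ne_zero ht0 (by positivity)))
  have hsinc : 0 < sinc t ^ 2 := by
    rw [sinc_of_ne_zero ht0]; positivity
  rw [borweinIntegrand_eq_sinc_sq_mul]
  exact mul_lt_of_lt_one_right hsinc (lt_of_abs_lt hprod)

theorem integral_borweinIntegrand_lt {n : ℕ} (hn : 1 ≤ n) : ∫ t, borweinIntegrand n t < π := by
  rw [← integral_sinc_sq, ← sub_pos, ← integral_sub integrable_sinc_sq
    (integrable_borweinIntegrand n)]
  refine integral_pos_of_integrable_nonneg_nonzero (x := π / 2)
    ((continuous_sinc.pow 2).sub (continuous_borweinIntegrand n))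
    (integrable_sinc_sq.sub (integrable_borweinIntegrand n))
    (fun t => sub_nonneg.2 ((le_abs_self _).trans (abs_borweinIntegrand_le n t))) ?_
  exact (sub_pos.2 (borweinIntegrand_lt_sinc_sq hn (by simp))).ne'

end Real

theorem sinc_eq_real_sinc : _root_.sinc = Real.sinc := rfl

/-- With `I_n(b) = b ∫_0^∞ sinc(bt) ∏_{k=0}^n sinc(t/(2k+1)) dt`:
`I_n(1) = π/2` for `n ≤ 0`, and `I_n(1) < π/2` for `n ≥ 0 + 1`. -/
theorem I_one_values :
    (∀ n : ℕ, n ≤ 0 →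
      Filter.Tendsto
        (fun R : ℝ => (1 : ℝ) * ∫ t in (0:ℝ)..R,
          _root_.sinc ((1 : ℝ) * t) * ∏ k ∈ Finset.range (n + 1), _root_.sinc (t / (2 * (k : ℝ) + 1)))
        Filter.atTop (nhds (π / 2))) ∧
    (∀ n : ℕ, 0 + 1 ≤ n → ∀ I : ℝ,
      Filter.Tendsto
        (fun R : ℝ => (1 : ℝ) * ∫ t in (0:ℝ)..R,
          _root_.sinc ((1 : ℝ) * t) * ∏ k ∈ Finset.range (n + 1), _root_.sinc (t / (2 * (k : ℝ) + 1)))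
        Filter.atTop (nhds I) →
      I < π / 2) := by
  have hI (n : ℕ) : (fun R : ℝ => (1 : ℝ) * ∫ t in (0:ℝ)..R, _root_.sinc ((1 : ℝ) * t) *
      ∏ k ∈ Finset.range (n + 1), _root_.sinc (t / (2 * (k : ℝ) + 1))) =
      fun R => ∫ t in 0..R, borweinIntegrand n t := by
    simp only [one_mul, sinc_eq_real_sinc]
    rfl
  have hlim (n : ℕ) := tendsto_intervalIntegral_of_even (borweinIntegrand_neg n)
    (integrable_borweinIntegrand n)
  refine ⟨fun n hn => ?_, fun n hn I hconv => ?_⟩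
  · obtain rfl := Nat.le_zero.1 hn
    simpa only [hI, borweinIntegrand_zero, integral_sinc_sq] using hlim 0
  · rw [hI] at hconv
    rw [tendsto_nhds_unique hconv (hlim n)]
    linarith [integral_borweinIntegrand_lt hn]
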